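/- (Density Theorem, weak operator topology.) For every bounded operator A on H, every ε > 0, every m ∈ ℕ, and all families of vectors v, u : Fin m → H, there exist a finite subset D ⊆ ℤ^n and a bounded operator T on H that is local upon D such that |⟪u i, A (v i) − T (v i)⟫| < ε for all i; that is, the local operators are dense in the bounded operators on H in the weak operator topology. -/

import Mathlib

open scoped ENNReal

noncomputable section

namespace QCA

abbrev Lat (n : ℕ) : Type := Fin n → ℤ

def Conf (n : ℕ) (A : Type*) (q0 : A) : Type _ :=
  {c : Lat n → A // {x : Lat n | c x ≠ q0}.Finite}

def c0 (n : ℕ) (A : Type*) (q0 : A) : Conf n A q0 :=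
  ⟨fun _ => q0, by simp⟩

abbrev H (n : ℕ) (A : Type*) (q0 : A) : Type _ := lp (fun _ : Conf n A q0 => ℂ) 2

def eVec {n : ℕ} {A : Type*} {q0 : A} (c : Conf n A q0) : H n A q0 :=
  letI : DecidableEq (Conf n A q0) := Classical.decEq _
  lp.single 2 c 1

/-- Translation of a configuration by `z`: the configuration `x ↦ c (x + z)`. -/
def shiftConf {n : ℕ} {A : Type*} {q0 : A} (z : Lat n) (c : Conf n A q0) : Conf n A q0 :=
  ⟨fun x => c.1 (x + z), by
    have h : {x : Lat n | c.1 (x + z) ≠ q0} ⊆ (fun x : Lat n => x + z) ⁻¹' {x | c.1 x ≠ q0} :=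
      fun x hx => hx
    exact (c.2.preimage ((add_left_injective z).injOn)).subset h⟩

/-- Translation by `z` as a permutation of the set of finite configurations. -/
def shiftEquiv {n : ℕ} {A : Type*} (q0 : A) (z : Lat n) : Conf n A q0 ≃ Conf n A q0 where
  toFun := shiftConf z
  invFun := shiftConf (-z)
  left_inv c := Subtype.ext (funext fun x => by
    show c.1 (x + -z + z) = c.1 x
    rw [neg_add_cancel_right])
  right_inv c := Subtype.ext (funext fun x => by
    show c.1 (x + z + -z) = c.1 x
    rw [add_neg_cancel_right])

theorem memℓp_comp_equiv {ι κ : Type*} (e : κ ≃ ι) {f : ι → ℂ} (hf : Memℓp f 2) :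
    Memℓp (fun k => f (e k)) 2 := by
  have hp : 0 < (2 : ℝ≥0∞).toReal := by norm_num
  exact memℓp_gen ((e.summable_iff
    (f := fun i => ‖f i‖ ^ (2 : ℝ≥0∞).toReal)).mpr (hf.summable hp))

/-- The unitary operator on `ℓ²` induced by a permutation of the index set. -/
def lpCongr {ι κ : Type*} (e : ι ≃ κ) :
    lp (fun _ : ι => ℂ) 2 ≃ₗᵢ[ℂ] lp (fun _ : κ => ℂ) 2 where
  toLinearEquiv :=
    { toFun := fun f => ⟨fun k => f (e.symm k), memℓp_comp_equiv e.symm (lp.memℓp f)⟩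
      map_add' := fun f g => lp.ext (funext fun k => by
        simp [lp.coeFn_add] <;> rfl)
      map_smul' := fun r f => lp.ext (funext fun k => by
        simp [lp.coeFn_smul])
      invFun := fun g => ⟨fun i => g (e i), memℓp_comp_equiv e (lp.memℓp g)⟩
      left_inv := fun f => lp.ext (funext fun i => by simp)
      right_inv := fun g => lp.ext (funext fun k => by simp) }
  norm_map' := fun f => by
    have hp : 0 < (2 : ℝ≥0∞).toReal := by norm_num
    rw [lp.norm_eq_tsum_rpow hp, lp.norm_eq_tsum_rpow hp]
    congr 1
    exact e.symm.tsum_eq (fun i => ‖f i‖ ^ (2 : ℝ≥0∞).toReal)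

/-- The translation operator `τ_z` on the Hilbert space of finite configurations. -/
def tau {n : ℕ} {A : Type*} (q0 : A) (z : Lat n) : H n A q0 ≃ₗᵢ[ℂ] H n A q0 :=
  lpCongr (shiftEquiv q0 z)

/-- A bounded operator on `H` is translation invariant if `τ_z ∘ M ∘ τ_z⁻¹ = M` for all `z`. -/
def TranslationInvariant {n : ℕ} {A : Type*} (q0 : A) (M : H n A q0 →L[ℂ] H n A q0) : Prop :=
  ∀ (z : Lat n) (v : H n A q0), tau q0 z (M ((tau q0 z).symm v)) = M v


section Local

variable {n : ℕ} {A : Type*} [Fintype A]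

/-- The configuration agreeing with `f` on `D` and with `c` outside `D`. -/
def override {q0 : A} (D : Finset (Lat n)) (f : {x // x ∈ D} → A) (c : Conf n A q0) :
    Conf n A q0 :=
  ⟨fun x => if h : x ∈ D then f ⟨x, h⟩ else c.1 x, by
    refine Set.Finite.subset (Set.Finite.union D.finite_toSet c.2) ?_
    intro x hx
    rcases Decidable.em (x ∈ D) with h | h
    · exact Set.mem_union_left _ h
    · exact Set.mem_union_right _ (by simpa [h] using hx)⟩

/-- A bounded operator on the Hilbert space of finite configurations is local upon the finite
set `D` of cells if its action on basis vectors only modifies, and only reads, the cells in `D`. -/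
def IsLocalUpon (q0 : A) (D : Finset (Lat n)) (T : H n A q0 →L[ℂ] H n A q0) : Prop :=
  ∃ a : ({x // x ∈ D} → A) → ({x // x ∈ D} → A) → ℂ, ∀ c : Conf n A q0,
    T (eVec c) = ∑ f : {x // x ∈ D} → A,
      a f (fun x => c.1 x.1) • eVec (override D f c)

/-- The neighborhood of the cell `x`: `𝒩_x = {x + k : k ∈ 𝒩}`. -/
def nbhd {n : ℕ} (𝒩 : Finset (Lat n)) (x : Lat n) : Finset (Lat n) :=
  𝒩.image (fun k => x + k)

/-- The reflected neighborhood of the cell `x`: `𝒱_x = {x - k : k ∈ 𝒩}`. -/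
def rnbhd {n : ℕ} (𝒩 : Finset (Lat n)) (x : Lat n) : Finset (Lat n) :=
  𝒩.image (fun k => x - k)

/-- A unitary `M` is causal relative to the neighborhood `𝒩` if conjugation `M† A M` maps
operators local upon a cell `x` to operators local upon `𝒩_x`. -/
def Causal (q0 : A) (𝒩 : Finset (Lat n)) (M : H n A q0 →L[ℂ] H n A q0) : Prop :=
  ∀ (x : Lat n) (B : H n A q0 →L[ℂ] H n A q0), IsLocalUpon q0 {x} B →
    IsLocalUpon q0 (nbhd 𝒩 x) (ContinuousLinearMap.adjoint M ∘L B ∘L M)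

end Local

/-- The standard basis vector of the one-cell Hilbert space `ℂ^A`. -/
def wVec (A : Type*) [Fintype A] (a : A) : EuclideanSpace ℂ A :=
  letI : DecidableEq A := Classical.decEq A
  EuclideanSpace.single a 1

/-- The configuration obtained from `c` by replacing the value at the cell `x` by `r`. -/
def updateConf {n : ℕ} {A : Type*} {q0 : A} (x : Lat n) (r : A) (c : Conf n A q0) :
    Conf n A q0 :=
  ⟨Function.update c.1 x r, by
    refine Set.Finite.subset (c.2.union (Set.finite_singleton x)) ?_
    intro y hy
    rcases eq_or_ne y x with rfl | hxy
    · exact Set.mem_union_right _ rfl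
    · exact Set.mem_union_left _ (by
        simpa [Function.update_of_ne hxy] using hy)⟩

/-- The subalgebra `𝔇_{y,x}` of `End(ℂ^A)`: endomorphisms `a` of the one-cell Hilbert space
such that the operator `ι_x(a)` local upon `{x}` implementing `a` at the cell `x` is of the form
`R† B R` for some operator `B` local upon `{x - y}`. -/
def Dset {n : ℕ} {A : Type*} [Fintype A] (q0 : A)
    (R : H n A q0 →L[ℂ] H n A q0) (y x : Lat n) :
    Set (Module.End ℂ (EuclideanSpace ℂ A)) :=
  {a | ∃ B : H n A q0 →L[ℂ] H n A q0, IsLocalUpon q0 {x - y} B ∧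
    ∀ c : Conf n A q0,
      (ContinuousLinearMap.adjoint R ∘L B ∘L R) (eVec c) =
        ∑ q : A, (inner ℂ (wVec A q) (a (wVec A (c.1 x))) : ℂ) • eVec (updateConf x q c)}



section Component

variable {n : ℕ} {𝒩 : Finset (Lat n)} {K : {z // z ∈ 𝒩} → Type*}

/-- The propagation map on configurations in component form:
`(s c) x z = (c (x + z)) z`. -/
def sConf (qz : ∀ z : {z // z ∈ 𝒩}, K z) (c : Conf n (∀ z : {z // z ∈ 𝒩}, K z) qz) :
    Conf n (∀ z : {z // z ∈ 𝒩}, K z) qz :=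
  ⟨fun x z => c.1 (x + z.1) z, by
    refine Set.Finite.subset
      (Set.finite_iUnion (fun z : {z // z ∈ 𝒩} =>
        (c.2.preimage ((add_left_injective z.1).injOn)))) ?_
    intro x hx
    obtain ⟨z, hz⟩ := Function.ne_iff.mp hx
    exact Set.mem_iUnion.2 ⟨z, fun h => hz (congrFun h z)⟩⟩

end Component

/-- The support of a finite configuration, as a `Finset`. -/
def suppF {n : ℕ} {A : Type*} {q0 : A} (c : Conf n A q0) : Finset (Lat n) :=
  c.2.toFinset

/-- The property characterizing the local isomorphism `S̃ : H → Ĥ` induced by a one-cell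
unitary `S : W → Ŵ`. -/
def StildeProp {n : ℕ} {A B : Type*} [Fintype A] [Fintype B] (q0 : A) (qh : B)
    (Slin : EuclideanSpace ℂ A ≃ₗᵢ[ℂ] EuclideanSpace ℂ B)
    (St : H n A q0 ≃ₗᵢ[ℂ] H n B qh) : Prop :=
  ∀ c : Conf n A q0,
    St (eVec c) = ∑ g : {x // x ∈ suppF c} → B,
      (∏ x : {x // x ∈ suppF c}, (inner ℂ (wVec B (g x)) (Slin (wVec A (c.1 x.1))) : ℂ)) •
        eVec (override (suppF c) g (c0 n B qh))

/-- An endomorphism of the one-cell Hilbert space `ℂ^P`, `P = Π_{z ∈ 𝒩} K z`, acting only on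
the `y`-th coordinate. -/
def ActsOnCoord {n : ℕ} {𝒩 : Finset (Lat n)} {K : {z // z ∈ 𝒩} → Type*}
    [∀ z, Fintype (K z)] (y : {z // z ∈ 𝒩})
    (Aop : Module.End ℂ (EuclideanSpace ℂ (∀ z : {z // z ∈ 𝒩}, K z))) : Prop :=
  ∃ f : K y → K y → ℂ, ∀ p p' : ∀ z : {z // z ∈ 𝒩}, K z,
    ((∀ z : {z // z ∈ 𝒩}, z ≠ y → p z = p' z) →
      (inner ℂ (wVec _ p) (Aop (wVec _ p')) : ℂ) = f (p y) (p' y)) ∧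
    (¬ (∀ z : {z // z ∈ 𝒩}, z ≠ y → p z = p' z) →
      (inner ℂ (wVec _ p) (Aop (wVec _ p')) : ℂ) = 0)

/-- A factorization of the module `W` as a tensor product `⨂_{k} V k` carrying the sets of
endomorphisms `Dsets k` onto the endomorphisms acting on the `k`-th tensor factor alone. -/
structure PiTensorFactorization (ι : Type) [Fintype ι] [DecidableEq ι]
    (W : Type*) [AddCommGroup W] [Module ℂ W]
    (Dsets : ι → Set (Module.End ℂ W)) : Type _ where
  /-- The tensor factors. -/
  V : ι → Type
  [grp : ∀ k, AddCommGroup (V k)]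
  [mod : ∀ k, Module ℂ (V k)]
  fin : ∀ k, FiniteDimensional ℂ (V k)
  /-- The linear isomorphism with the tensor product. -/
  S : W ≃ₗ[ℂ] PiTensorProduct ℂ V
  cond : ∀ y : ι,
    (fun a : Module.End ℂ W => S.conj a) '' (Dsets y) =
      Set.range (fun f : Module.End ℂ (V y) =>
        (PiTensorProduct.map
          (Function.update (fun k => (LinearMap.id : V k →ₗ[ℂ] V k)) y f) :
            Module.End ℂ (PiTensorProduct ℂ V)))

/-- The continuous linear map underlying a linear isometry equivalence. -/
def isomCLM {E F : Type*} [NormedAddCommGroup E] [NormedAddCommGroup F]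
    [NormedSpace ℂ E] [NormedSpace ℂ F] (e : E ≃ₗᵢ[ℂ] F) : E →L[ℂ] F :=
  e.toLinearIsometry.toContinuousLinearMap


end QCA

/-!
Fix a finite set `D` of cells and let `R` be the set of configurations quiescent on `D`. Splitting a
configuration into its part off `D` and its pattern on `D` identifies `H` with
`ℓ²(R) ⊗ ℓ²(D → Q)`. Let `a` be the compression of `A` to the span of the basis vectors of the
configurations supported in `D`. Then `T_D = id ⊗ a` is local upon `D`, `‖T_D‖ ≤ ‖a‖ ≤ ‖A‖`, and
`T_D` has the same matrix entries as `A` between configurations supported in `D`. Hence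
`⟪P_D u, (A - T_D) (P_D v)⟫ = 0`, where `P_D` truncates a vector to those configurations. As `D`
grows, `P_D u → u` and `P_D v → v`, and since `‖A - T_D‖ ≤ 2 ‖A‖` uniformly in `D`, this forces
`⟪u, (A - T_D) v⟫ → 0`.
-/

open Filter Topology

section L2

variable {𝕜 : Type*} [RCLike 𝕜]

theorem memℓp_two_iff {ι : Type*} {E : ι → Type*} [∀ i, NormedAddCommGroup (E i)]
    {f : ∀ i, E i} : Memℓp f 2 ↔ Summable fun i => ‖f i‖ ^ 2 := by
  simpa using memℓp_gen_iff (E := E) (p := 2) (f := f) (by norm_num)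

theorem lp.hasSum_norm_sq {ι : Type*} {E : ι → Type*} [∀ i, NormedAddCommGroup (E i)]
    (f : lp E 2) : HasSum (fun i => ‖f i‖ ^ 2) (‖f‖ ^ 2) := by
  simpa using lp.hasSum_norm (p := 2) (by norm_num) f

variable {R X : Type*} [Fintype X]

def fiberVec (w : R × X → 𝕜) (r : R) : EuclideanSpace 𝕜 X :=
  WithLp.toLp 2 fun x => w (r, x)

theorem norm_fiberVec_sq (w : R × X → 𝕜) (r : R) :
    ‖fiberVec w r‖ ^ 2 = ∑ x, ‖w (r, x)‖ ^ 2 :=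
  EuclideanSpace.norm_sq_eq _

theorem memℓp_two_of_summable_norm_fiberVec_sq {w : R × X → 𝕜}
    (h : Summable fun r => ‖fiberVec w r‖ ^ 2) : Memℓp w 2 := by
  refine memℓp_two_iff.2 ((summable_prod_of_nonneg fun _ => by positivity).2
    ⟨fun _ => Summable.of_finite, ?_⟩)
  simpa only [tsum_fintype, norm_fiberVec_sq] using h

theorem hasSum_norm_fiberVec_sq (v : lp (fun _ : R × X => 𝕜) 2) :
    HasSum (fun r => ‖fiberVec v r‖ ^ 2) (‖v‖ ^ 2) :=
  (lp.hasSum_norm_sq v).prod_fiberwise fun r => by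
    rw [norm_fiberVec_sq]
    exact hasSum_fintype _

end L2

section LTensor

variable {𝕜 : Type*} [RCLike 𝕜] {R X : Type*} [Fintype X]
  (M : EuclideanSpace 𝕜 X →L[𝕜] EuclideanSpace 𝕜 X)

theorem norm_apply_fiberVec_sq_le (w : R × X → 𝕜) (r : R) :
    ‖M (fiberVec w r)‖ ^ 2 ≤ ‖M‖ ^ 2 * ‖fiberVec w r‖ ^ 2 := by
  rw [← mul_pow]
  exact pow_le_pow_left₀ (norm_nonneg _) (M.le_opNorm _) 2

theorem summable_norm_apply_fiberVec_sq (v : lp (fun _ : R × X => 𝕜) 2) :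
    Summable fun r => ‖M (fiberVec v r)‖ ^ 2 :=
  .of_nonneg_of_le (fun _ => by positivity) (norm_apply_fiberVec_sq_le M v)
    ((hasSum_norm_fiberVec_sq v).summable.mul_left (‖M‖ ^ 2))

def lTensorLpₗ : lp (fun _ : R × X => 𝕜) 2 →ₗ[𝕜] lp (fun _ : R × X => 𝕜) 2 where
  toFun v := ⟨fun p => M (fiberVec v p.1) p.2,
    memℓp_two_of_summable_norm_fiberVec_sq (summable_norm_apply_fiberVec_sq M v)⟩
  map_add' v w := by
    ext p
    show M (fiberVec ⇑(v + w) p.1) p.2 = (M (fiberVec v p.1) + M (fiberVec w p.1)) p.2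
    rw [← map_add]
    rfl
  map_smul' c v := by
    ext p
    show M (fiberVec ⇑(c • v) p.1) p.2 = (c • M (fiberVec v p.1)) p.2
    rw [← map_smul]
    rfl

theorem norm_lTensorLpₗ_le (v : lp (fun _ : R × X => 𝕜) 2) :
    ‖lTensorLpₗ M v‖ ≤ ‖M‖ * ‖v‖ := by
  refine (sq_le_sq₀ (norm_nonneg _) (by positivity)).1 ?_
  rw [mul_pow]
  exact hasSum_le (norm_apply_fiberVec_sq_le M v) (hasSum_norm_fiberVec_sq (lTensorLpₗ M v))
    ((hasSum_norm_fiberVec_sq v).mul_left (‖M‖ ^ 2))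

/-- The operator `id ⊗ M` on `ℓ²(R × X) ≅ ℓ²(R) ⊗ ℓ²(X)`. -/
def lTensorLp : lp (fun _ : R × X => 𝕜) 2 →L[𝕜] lp (fun _ : R × X => 𝕜) 2 :=
  (lTensorLpₗ M).mkContinuous ‖M‖ (norm_lTensorLpₗ_le M)

theorem lTensorLp_apply (v : lp (fun _ : R × X => 𝕜) 2) (p : R × X) :
    lTensorLp M v p = M (fiberVec v p.1) p.2 :=
  rfl

theorem norm_lTensorLp_le : ‖lTensorLp (R := R) M‖ ≤ ‖M‖ :=
  LinearMap.mkContinuous_norm_le _ (norm_nonneg M) _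

theorem lTensorLp_single [DecidableEq R] [DecidableEq X] (p : R × X) :
    lTensorLp M (lp.single 2 p 1) =
      ∑ f, M (EuclideanSpace.single p.2 1) f • lp.single 2 (p.1, f) 1 := by
  ext ⟨r', f'⟩
  have hfiber : fiberVec (lp.single 2 p (1 : 𝕜)) r' =
      if r' = p.1 then EuclideanSpace.single p.2 1 else 0 := by
    ext x
    by_cases h : r' = p.1 <;> simp [fiberVec, lp.single_apply, Pi.single_apply, Prod.ext_iff, h]
  rw [lTensorLp_apply, hfiber, lp.coeFn_sum, Finset.sum_apply]
  by_cases h : r' = p.1 <;> simp [h, lp.single_apply, Pi.single_apply]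

end LTensor

section Compression

variable {𝕜 E X : Type*} [RCLike 𝕜] [NormedAddCommGroup E] [InnerProductSpace 𝕜 E] [Fintype X]
  {b : X → E}

def Orthonormal.euclideanIsometry (hb : Orthonormal 𝕜 b) : EuclideanSpace 𝕜 X →ₗᵢ[𝕜] E :=
  LinearMap.isometryOfOrthonormal ((EuclideanSpace.basisFun X 𝕜).toBasis.constr 𝕜 b)
    (v := (EuclideanSpace.basisFun X 𝕜).toBasis) (EuclideanSpace.basisFun X 𝕜).orthonormal (by
      convert hb using 1
      funext i
      exact Module.Basis.constr_basis _ _ _ _)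

theorem Orthonormal.euclideanIsometry_single [DecidableEq X] (hb : Orthonormal 𝕜 b) (g : X) :
    hb.euclideanIsometry (EuclideanSpace.single g 1) = b g := by
  rw [← EuclideanSpace.basisFun_apply, ← OrthonormalBasis.coe_toBasis]
  exact Module.Basis.constr_basis _ _ _ _

variable [CompleteSpace E]

def Orthonormal.compress (hb : Orthonormal 𝕜 b) (A : E →L[𝕜] E) :
    EuclideanSpace 𝕜 X →L[𝕜] EuclideanSpace 𝕜 X :=
  ContinuousLinearMap.adjoint hb.euclideanIsometry.toContinuousLinearMap ∘L A ∘L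
    hb.euclideanIsometry.toContinuousLinearMap

theorem Orthonormal.norm_compress_le (hb : Orthonormal 𝕜 b) (A : E →L[𝕜] E) :
    ‖hb.compress A‖ ≤ ‖A‖ := by
  have hV := hb.euclideanIsometry.norm_toContinuousLinearMap_le
  have hV' : ‖ContinuousLinearMap.adjoint hb.euclideanIsometry.toContinuousLinearMap‖ ≤ 1 := by
    rwa [LinearIsometryEquiv.norm_map]
  exact (ContinuousLinearMap.opNorm_comp_le _ _).trans <|
    (mul_le_of_le_one_left (norm_nonneg _) hV').trans <|
    (ContinuousLinearMap.opNorm_comp_le _ _).trans (mul_le_of_le_one_right (norm_nonneg _) hV)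

theorem Orthonormal.compress_single_apply [DecidableEq X] (hb : Orthonormal 𝕜 b)
    (A : E →L[𝕜] E) (f g : X) :
    hb.compress A (EuclideanSpace.single g 1) f = inner 𝕜 (b f) (A (b g)) := by
  have h := ContinuousLinearMap.adjoint_inner_right hb.euclideanIsometry.toContinuousLinearMap
    (EuclideanSpace.single f 1) (A (hb.euclideanIsometry (EuclideanSpace.single g 1)))
  rw [EuclideanSpace.inner_single_left, map_one, one_mul] at h
  rw [← hb.euclideanIsometry_single f, ← hb.euclideanIsometry_single g]
  exact h

end Compression

theorem norm_inner_le_of_inner_eq_zero {𝕜 E : Type*} [RCLike 𝕜] [NormedAddCommGroup E]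
    [InnerProductSpace 𝕜 E] (B : E →L[𝕜] E) {u v u' v' : E} (h : inner 𝕜 u' (B v') = 0) :
    ‖inner 𝕜 u (B v)‖ ≤ ‖u - u'‖ * (‖B‖ * ‖v‖) + ‖u'‖ * (‖B‖ * ‖v - v'‖) := by
  have hsplit : inner 𝕜 u (B v) = inner 𝕜 (u - u') (B v) + inner 𝕜 u' (B (v - v')) := by
    rw [inner_sub_left, map_sub, inner_sub_right, h]
    ring
  rw [hsplit]
  refine (norm_add_le _ _).trans (add_le_add ?_ ?_) <;>
    exact (norm_inner_le_norm _ _).trans (mul_le_mul_of_nonneg_left (B.le_opNorm _) (norm_nonneg _))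

namespace QCA

theorem lpCongr_single {ι κ : Type*} [DecidableEq ι] [DecidableEq κ] (e : ι ≃ κ) (i : ι)
    (a : ℂ) : lpCongr e (lp.single 2 i a) = lp.single 2 (e i) a := by
  ext k
  simp [lpCongr, lp.single_apply, Pi.single_apply, Equiv.symm_apply_eq]

theorem norm_isomCLM_le {E F : Type*} [NormedAddCommGroup E] [NormedAddCommGroup F]
    [NormedSpace ℂ E] [NormedSpace ℂ F] (e : E ≃ₗᵢ[ℂ] F) : ‖isomCLM e‖ ≤ 1 :=
  e.toLinearIsometry.norm_toContinuousLinearMap_le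

section Configurations

variable {n : ℕ} {Q : Type*} {q₀ : Q}

theorem Conf.ext {c c' : Conf n Q q₀} (h : ∀ x, c.1 x = c'.1 x) : c = c' :=
  Subtype.ext (funext h)

def Conf.restrict (D : Finset (Lat n)) (c : Conf n Q q₀) : D → Q :=
  fun x => c.1 x.1

variable {D : Finset (Lat n)}

theorem override_apply_of_mem (f : D → Q) (c : Conf n Q q₀) {x : Lat n} (h : x ∈ D) :
    (override D f c).1 x = f ⟨x, h⟩ :=
  dif_pos h

theorem override_apply_of_notMem (f : D → Q) (c : Conf n Q q₀) {x : Lat n} (h : x ∉ D) :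
    (override D f c).1 x = c.1 x :=
  dif_neg h

theorem restrict_override (f : D → Q) (c : Conf n Q q₀) : (override D f c).restrict D = f :=
  funext fun x => override_apply_of_mem f c x.2

theorem override_override (f g : D → Q) (c : Conf n Q q₀) :
    override D f (override D g c) = override D f c :=
  Conf.ext fun x => by
    by_cases h : x ∈ D
    · rw [override_apply_of_mem f _ h, override_apply_of_mem f c h]
    · rw [override_apply_of_notMem f _ h, override_apply_of_notMem g c h,
        override_apply_of_notMem f c h]

theorem override_restrict_self (c : Conf n Q q₀) : override D (c.restrict D) c = c :=
  Conf.ext fun x => by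
    by_cases h : x ∈ D
    · exact override_apply_of_mem _ c h
    · exact override_apply_of_notMem _ c h

variable (q₀ D) in
def QuiescentOn : Type _ :=
  {c : Conf n Q q₀ // ∀ x ∈ D, c.1 x = q₀}

variable (q₀ D) in
def confEquiv : Conf n Q q₀ ≃ QuiescentOn q₀ D × (D → Q) where
  toFun c := (⟨override D (fun _ => q₀) c, fun _ hx => override_apply_of_mem _ c hx⟩,
    c.restrict D)
  invFun p := override D p.2 p.1.1
  left_inv c := by
    simp only [override_override, override_restrict_self]
  right_inv := fun ⟨r, f⟩ => by
    refine Prod.ext (Subtype.ext ?_) (restrict_override f r.1)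
    show override D (fun _ => q₀) (override D f r.1) = r.1
    rw [override_override]
    refine Conf.ext fun x => ?_
    by_cases h : x ∈ D
    · rw [override_apply_of_mem _ _ h, r.2 x h]
    · exact override_apply_of_notMem _ _ h

theorem confEquiv_symm_mk_confEquiv_fst (c : Conf n Q q₀) (f : D → Q) :
    (confEquiv q₀ D).symm ((confEquiv q₀ D c).1, f) = override D f c :=
  override_override f (fun _ => q₀) c

theorem confEquiv_apply_snd (c : Conf n Q q₀) : (confEquiv q₀ D c).2 = c.restrict D :=
  rfl

variable (q₀ D) in
def ofPattern (f : D → Q) : Conf n Q q₀ :=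
  override D f (c0 n Q q₀)

theorem restrict_ofPattern (f : D → Q) : (ofPattern q₀ D f).restrict D = f :=
  restrict_override f _

theorem ofPattern_injective : Function.Injective (ofPattern q₀ D) := fun f g h => by
  simpa only [ofPattern, restrict_override] using congrArg (Conf.restrict D) h

theorem override_ofPattern (f g : D → Q) : override D f (ofPattern q₀ D g) = ofPattern q₀ D f :=
  override_override f g _

theorem ofPattern_restrict {c : Conf n Q q₀} (h : suppF c ⊆ D) :
    ofPattern q₀ D (c.restrict D) = c :=
  Conf.ext fun x => by
    by_cases hx : x ∈ D
    · exact override_apply_of_mem _ _ hx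
    · rw [ofPattern, override_apply_of_notMem _ _ hx]
      by_contra hne
      exact hx (h ((Set.Finite.mem_toFinset c.2).2 (Ne.symm hne)))

end Configurations

section Localization

variable {n : ℕ} {Q : Type*} {q₀ : Q}

theorem eVec_eq_single [DecidableEq (Conf n Q q₀)] (c : Conf n Q q₀) :
    eVec c = lp.single 2 c 1 := by
  unfold eVec
  congr
  exact Subsingleton.elim _ _

theorem inner_eVec_left (c : Conf n Q q₀) (w : H n Q q₀) : inner ℂ (eVec c) w = w c := by
  classical
  simp [eVec_eq_single, lp.inner_single_left]

theorem orthonormal_eVec : Orthonormal ℂ (eVec : Conf n Q q₀ → H n Q q₀) := by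
  classical
  refine orthonormal_iff_ite.2 fun c c' => ?_
  rw [inner_eVec_left, eVec_eq_single, lp.single_apply, Pi.single_apply]

theorem hasSum_eVec (v : H n Q q₀) : HasSum (fun c => v c • eVec c) v := by
  classical
  simpa [eVec_eq_single, ← lp.single_smul] using lp.hasSum_single (p := 2) (by simp) v

theorem orthonormal_eVec_ofPattern (D : Finset (Lat n)) :
    Orthonormal ℂ fun f : D → Q => eVec (ofPattern q₀ D f) :=
  orthonormal_eVec.comp _ ofPattern_injective

variable [Fintype Q] (A : H n Q q₀ →L[ℂ] H n Q q₀) (D : Finset (Lat n))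

/-- `id ⊗ a` on `H ≅ ℓ²(QuiescentOn q₀ D) ⊗ ℓ²(D → Q)`, where `a` is the compression of `A` to
the configurations supported in `D`. -/
def localization : H n Q q₀ →L[ℂ] H n Q q₀ :=
  isomCLM (lpCongr (confEquiv q₀ D).symm) ∘L
    lTensorLp ((orthonormal_eVec_ofPattern D).compress A) ∘L isomCLM (lpCongr (confEquiv q₀ D))

theorem localization_eVec (c : Conf n Q q₀) :
    localization A D (eVec c) = ∑ f : D → Q,
      inner ℂ (eVec (ofPattern q₀ D f)) (A (eVec (ofPattern q₀ D (c.restrict D)))) •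
        eVec (override D f c) := by
  classical
  simp only [localization, isomCLM, ContinuousLinearMap.comp_apply,
    LinearIsometry.coe_toContinuousLinearMap, LinearIsometryEquiv.coe_toLinearIsometry,
    eVec_eq_single, lpCongr_single]
  rw [lTensorLp_single, map_sum]
  refine Finset.sum_congr rfl fun f _ => ?_
  rw [map_smul, lpCongr_single, Orthonormal.compress_single_apply, confEquiv_apply_snd,
    confEquiv_symm_mk_confEquiv_fst]

theorem isLocalUpon_localization : IsLocalUpon q₀ D (localization A D) :=
  ⟨fun f g => inner ℂ (eVec (ofPattern q₀ D f)) (A (eVec (ofPattern q₀ D g))),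
    localization_eVec A D⟩

theorem norm_localization_le : ‖localization A D‖ ≤ ‖A‖ :=
  (ContinuousLinearMap.opNorm_comp_le _ _).trans <|
    (mul_le_of_le_one_left (norm_nonneg _) (norm_isomCLM_le _)).trans <|
    (ContinuousLinearMap.opNorm_comp_le _ _).trans <|
    (mul_le_of_le_one_right (norm_nonneg _) (norm_isomCLM_le _)).trans <|
    (norm_lTensorLp_le _).trans (Orthonormal.norm_compress_le _ A)

theorem inner_localization_ofPattern (f g : D → Q) :
    inner ℂ (eVec (ofPattern q₀ D f)) (localization A D (eVec (ofPattern q₀ D g))) =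
      inner ℂ (eVec (ofPattern q₀ D f)) (A (eVec (ofPattern q₀ D g))) := by
  rw [localization_eVec, restrict_ofPattern]
  simp only [override_ofPattern]
  exact (orthonormal_eVec_ofPattern D).inner_right_fintype _ f

end Localization

section Density

variable {n : ℕ} {Q : Type*} [Fintype Q] {q₀ : Q}

variable (q₀) in
def patternConfs (D : Finset (Lat n)) : Finset (Conf n Q q₀) :=
  Finset.univ.map ⟨ofPattern q₀ D, ofPattern_injective⟩

theorem tendsto_patternConfs :
    Tendsto (patternConfs (n := n) (Q := Q) q₀) atTop atTop :=
  Filter.tendsto_atTop_atTop.2 fun s => ⟨s.biUnion suppF, fun D hD c hc =>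
    Finset.mem_map.2 ⟨Conf.restrict D c, Finset.mem_univ _,
      ofPattern_restrict ((Finset.subset_biUnion_of_mem suppF hc).trans hD)⟩⟩

def truncate (D : Finset (Lat n)) (v : H n Q q₀) : H n Q q₀ :=
  ∑ c ∈ patternConfs q₀ D, v c • eVec c

theorem tendsto_truncate (v : H n Q q₀) :
    Tendsto (fun D => truncate D v) atTop (𝓝 v) :=
  (hasSum_eVec v).comp tendsto_patternConfs

theorem inner_truncate_sub_localization (A : H n Q q₀ →L[ℂ] H n Q q₀) (D : Finset (Lat n))
    (u v : H n Q q₀) :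
    inner ℂ (truncate D u) ((A - localization A D) (truncate D v)) = 0 := by
  simp only [truncate, patternConfs, Finset.sum_map, map_sum, map_smul, sum_inner, inner_sum,
    inner_smul_left, inner_smul_right, Function.Embedding.coeFn_mk,
    sub_apply, inner_sub_right, inner_localization_ofPattern, sub_self,
    mul_zero, Finset.sum_const_zero]

theorem tendsto_inner_sub_localization (A : H n Q q₀ →L[ℂ] H n Q q₀) (u v : H n Q q₀) :
    Tendsto (fun D => inner ℂ u (A v - localization A D v)) atTop (𝓝 0) := by
  have hu := tendsto_truncate u
  have hv := tendsto_truncate v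
  have hbound : Tendsto (fun D => ‖u - truncate D u‖ * (2 * ‖A‖ * ‖v‖) +
      ‖truncate D u‖ * (2 * ‖A‖ * ‖v - truncate D v‖)) atTop (𝓝 0) := by
    simpa using ((hu.const_sub u).norm.mul_const (2 * ‖A‖ * ‖v‖)).add
      (hu.norm.mul ((hv.const_sub v).norm.const_mul (2 * ‖A‖)))
  refine squeeze_zero_norm (fun D => ?_) hbound
  have hnorm : ‖A - localization A D‖ ≤ 2 * ‖A‖ := by
    linarith [norm_sub_le A (localization A D), norm_localization_le A D]
  rw [← sub_apply]
  refine (norm_inner_le_of_inner_eq_zero _ (inner_truncate_sub_localization A D u v)).trans ?_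
  gcongr

end Density

theorem local_operators_dense_weak_general
    (n : ℕ) (Q : Type) [Fintype Q] (q₀ : Q)
    (A : H n Q q₀ →L[ℂ] H n Q q₀) (ε : ℝ) (hε : 0 < ε) (m : ℕ)
    (v u : Fin m → H n Q q₀) :
    ∃ (D : Finset (Lat n)) (T : H n Q q₀ →L[ℂ] H n Q q₀),
      IsLocalUpon q₀ D T ∧
        ∀ i : Fin m, ‖(inner ℂ (u i) (A (v i) - T (v i)) : ℂ)‖ < ε := by
  have hsmall : ∀ i, ∀ᶠ D in atTop,
      ‖inner ℂ (u i) (A (v i) - localization A D (v i))‖ < ε := fun i =>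
    (tendsto_inner_sub_localization A (u i) (v i)).norm.eventually_lt_const (by simpa using hε)
  obtain ⟨D, hD⟩ := (Filter.eventually_all.2 hsmall).exists
  exact ⟨D, localization A D, isLocalUpon_localization A D, hD⟩

/-- Density Theorem, weak operator topology. The local operators are dense in
the bounded operators on `H` in the weak operator topology. -/
theorem local_operators_dense_weak
    (n : ℕ) (hn : 1 ≤ n) (Q : Type) [Fintype Q] (q₀ : Q)
    (A : H n Q q₀ →L[ℂ] H n Q q₀) (ε : ℝ) (hε : 0 < ε) (m : ℕ)
    (v u : Fin m → H n Q q₀) :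
    ∃ (D : Finset (Lat n)) (T : H n Q q₀ →L[ℂ] H n Q q₀),
      IsLocalUpon q₀ D T ∧
        ∀ i : Fin m, ‖(inner ℂ (u i) (A (v i) - T (v i)) : ℂ)‖ < ε :=
  local_operators_dense_weak_general n Q q₀ A ε hε m v u

end QCA
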